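/- Lottery-paradox consistency in BD: let φ₁, …, φₙ ∈ L_B (n ≥ 1) and let Γ = {φ̄₁, …, φ̄ₙ} ∪ {φ₁ ∨ ⋯ ∨ φₙ}. If for each i the set {φ₁ ∨ ⋯ ∨ φₙ, ¬φᵢ} is satisfiable by some classical valuation (equivalently, φ₁ ∨ ⋯ ∨ φₙ ⊬_PL φᵢ), then Γ is neither B-inconsistent nor BD-inconsistent. -/

import Mathlib

/-!
The beliefs of `Γ` are just `φ₁ ∨ ⋯ ∨ φₙ`, which is satisfiable, so `Γ` is not B-inconsistent.
A BD-inconsistency `Γ ⊢ φ`, `Γ ⊢ φ̄` would come from rule (D⊥), forcing the satisfiable belief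
set to entail `⊥`, or from rule (D) with some `φ̄ᵢ ∈ Γ`: then cutting `φ` out of
`φ₁ ∨ ⋯ ∨ φₙ, φ ⊢_PL φᵢ` gives `φ₁ ∨ ⋯ ∨ φₙ ⊢_PL φᵢ`, contradicting the countermodel for `φᵢ`.
-/

/-- Propositional formulas over a set of atoms `A`, with the usual connectives,
`⊥` and `⊤`. -/
inductive PLForm (A : Type) : Type
  | atom   : A → PLForm A
  | falsum : PLForm A
  | verum  : PLForm A
  | neg    : PLForm A → PLForm A
  | conj   : PLForm A → PLForm A → PLForm A
  | disj   : PLForm A → PLForm A → PLForm A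
  | impl   : PLForm A → PLForm A → PLForm A

/-- Evaluation of a propositional formula under a classical valuation. -/
def PLForm.eval {A : Type} (v : A → Bool) : PLForm A → Bool
  | .atom a   => v a
  | .falsum   => false
  | .verum    => true
  | .neg φ    => !(PLForm.eval v φ)
  | .conj φ ψ => PLForm.eval v φ && PLForm.eval v ψ
  | .disj φ ψ => PLForm.eval v φ || PLForm.eval v ψ
  | .impl φ ψ => !(PLForm.eval v φ) || PLForm.eval v ψ

/-- Classical propositional consequence `X ⊢_PL φ`: every valuation satisfying
all members of `X` satisfies `φ`. -/
def PLCons {A : Type} (X : Set (PLForm A)) (φ : PLForm A) : Prop :=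
  ∀ v : A → Bool, (∀ ψ ∈ X, PLForm.eval v ψ = true) → PLForm.eval v φ = true

/-- The language `L = L_B ∪ L_D`: a potential belief `φ` or a potential
disbelief `φ̄` for each propositional formula `φ`. -/
inductive LSent (A : Type) : Type
  | bel : PLForm A → LSent A
  | dis : PLForm A → LSent A

/-- The set of potential beliefs `L_B`. -/
def LB (A : Type) : Set (LSent A) := Set.range LSent.bel

/-- The set of potential disbeliefs `L_D`. -/
def LD (A : Type) : Set (LSent A) := Set.range LSent.dis

/-- The propositional formulas believed in `Γ` (so that `Γ_B` corresponds to
`LSent.bel '' bels Γ = Γ ∩ LB A`). -/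
def bels {A : Type} (Γ : Set (LSent A)) : Set (PLForm A) := {φ | LSent.bel φ ∈ Γ}

/-- The propositional formulas disbelieved in `Γ`. -/
def diss {A : Type} (Γ : Set (LSent A)) : Set (PLForm A) := {φ | LSent.dis φ ∈ Γ}

/-- The logic WBD: smallest relation closed under (B), (D⊥) and (WD). -/
inductive WBD {A : Type} : Set (LSent A) → LSent A → Prop
  | B {Γ : Set (LSent A)} {φ : PLForm A} :
      PLCons (bels Γ) φ → WBD Γ (.bel φ)
  | Dbot {Γ : Set (LSent A)} {φ : PLForm A} :
      PLCons {φ} .falsum → WBD Γ (.dis φ)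
  | WD {Γ : Set (LSent A)} {φ ψ : PLForm A} :
      LSent.dis ψ ∈ Γ → PLCons {φ} ψ → WBD Γ (.dis φ)

/-- The logic GBD: smallest relation closed under (B), (D⊥) and (GD). -/
inductive GBD {A : Type} : Set (LSent A) → LSent A → Prop
  | B {Γ : Set (LSent A)} {φ : PLForm A} :
      PLCons (bels Γ) φ → GBD Γ (.bel φ)
  | Dbot {Γ : Set (LSent A)} {φ : PLForm A} :
      PLCons {φ} .falsum → GBD Γ (.dis φ)
  | GD {Γ : Set (LSent A)} {φ : PLForm A} :
      PLCons (PLForm.neg '' diss Γ) (.neg φ) → GBD Γ (.dis φ)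

/-- The logic BD: smallest relation closed under (B), (D⊥) and (D). -/
inductive BD {A : Type} : Set (LSent A) → LSent A → Prop
  | B {Γ : Set (LSent A)} {φ : PLForm A} :
      PLCons (bels Γ) φ → BD Γ (.bel φ)
  | Dbot {Γ : Set (LSent A)} {φ : PLForm A} :
      PLCons {φ} .falsum → BD Γ (.dis φ)
  | D {Γ : Set (LSent A)} {φ ψ : PLForm A} :
      LSent.dis ψ ∈ Γ → PLCons (insert φ (bels Γ)) ψ → BD Γ (.dis φ)

/-- The logic BN: smallest relation closed under (B), (D⊥), (WD) and (D→B). -/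
inductive BN {A : Type} : Set (LSent A) → LSent A → Prop
  | B {Γ : Set (LSent A)} {φ : PLForm A} :
      PLCons (bels Γ) φ → BN Γ (.bel φ)
  | Dbot {Γ : Set (LSent A)} {φ : PLForm A} :
      PLCons {φ} .falsum → BN Γ (.dis φ)
  | WD {Γ : Set (LSent A)} {φ ψ : PLForm A} :
      LSent.dis ψ ∈ Γ → PLCons {φ} ψ → BN Γ (.dis φ)
  | DtoB {Γ : Set (LSent A)} {φ : PLForm A} :
      BN Γ (.dis φ) → BN Γ (.bel (.neg φ))

/-- Satisfaction in a WBD-model `(M, 𝒩)` (also used for BD-models):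
a belief `φ` holds iff `M ⊆ M(φ)`; a disbelief `φ̄` holds iff some
`N ∈ 𝒩` satisfies `N ⊆ M(¬φ)`. -/
def satWBD {A : Type} (M : Set (A → Bool)) (𝒩 : Set (Set (A → Bool))) :
    LSent A → Prop
  | .bel φ => ∀ v ∈ M, PLForm.eval v φ = true
  | .dis φ => ∃ N ∈ 𝒩, ∀ v ∈ N, PLForm.eval v φ = false

/-- WBD-entailment: truth in all WBD-models (with `𝒩` nonempty) of `Γ`. -/
def WBDent {A : Type} (Γ : Set (LSent A)) (α : LSent A) : Prop :=
  ∀ (M : Set (A → Bool)) (𝒩 : Set (Set (A → Bool))), 𝒩.Nonempty →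
    (∀ β ∈ Γ, satWBD M 𝒩 β) → satWBD M 𝒩 α

/-- Satisfaction in a GBD-model `(M, N)`. -/
def satGBD {A : Type} (M N : Set (A → Bool)) : LSent A → Prop
  | .bel φ => ∀ v ∈ M, PLForm.eval v φ = true
  | .dis φ => ∀ v ∈ N, PLForm.eval v φ = false

/-- GBD-entailment: truth in all GBD-models of `Γ`. -/
def GBDent {A : Type} (Γ : Set (LSent A)) (α : LSent A) : Prop :=
  ∀ (M N : Set (A → Bool)), (∀ β ∈ Γ, satGBD M N β) → satGBD M N α

/-- BD-entailment: truth in all BD-models of `Γ`, i.e. WBD-models where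
every `N ∈ 𝒩` is a subset of `M`. -/
def BDent {A : Type} (Γ : Set (LSent A)) (α : LSent A) : Prop :=
  ∀ (M : Set (A → Bool)) (𝒩 : Set (Set (A → Bool))), 𝒩.Nonempty →
    (∀ N ∈ 𝒩, N ⊆ M) → (∀ β ∈ Γ, satWBD M 𝒩 β) → satWBD M 𝒩 α

/-- `Γ` is B-inconsistent iff `Γ_B ⊢_BD ⊥`. -/
def BIncons {A : Type} (Γ : Set (LSent A)) : Prop :=
  BD (Γ ∩ LB A) (.bel .falsum)

/-- `Γ` is D-inconsistent iff `Γ_D ⊢_BD ⊤̄`. -/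
def DIncons {A : Type} (Γ : Set (LSent A)) : Prop :=
  BD (Γ ∩ LD A) (.dis .verum)

/-- `Γ` is BD-inconsistent iff `Γ ⊢_BD φ` and `Γ ⊢_BD φ̄` for some `φ ∈ L_B`. -/
def BDIncons {A : Type} (Γ : Set (LSent A)) : Prop :=
  ∃ φ : PLForm A, BD Γ (.bel φ) ∧ BD Γ (.dis φ)

def PLSat {A : Type} (X : Set (PLForm A)) : Prop :=
  ∃ v : A → Bool, ∀ ψ ∈ X, PLForm.eval v ψ = true

section PropositionalConsequence

variable {A : Type} {X : Set (PLForm A)} {φ ψ : PLForm A}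

theorem PLCons.cut (hφ : PLCons X φ) (hψ : PLCons (insert φ X) ψ) : PLCons X ψ :=
  fun v hv => hψ v (Set.forall_mem_insert.2 ⟨hφ v hv, hv⟩)

theorem PLCons.trans_singleton (hφ : PLCons X φ) (hψ : PLCons {φ} ψ) : PLCons X ψ :=
  fun v hv => hψ v fun _ h => h ▸ hφ v hv

theorem PLSat.not_PLCons_falsum (h : PLSat X) : ¬ PLCons X .falsum := by
  intro hX
  obtain ⟨v, hv⟩ := h
  simpa [PLForm.eval] using hX v hv

end PropositionalConsequence

section InformationSets

variable {A : Type}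

theorem bels_inter_LB (Γ : Set (LSent A)) : bels (Γ ∩ LB A) = bels Γ := by
  ext φ
  simp [bels, LB]

theorem bels_dis_image_union_bel_image (S X : Set (PLForm A)) :
    bels (LSent.dis '' S ∪ LSent.bel '' X) = X := by
  ext φ
  simp [bels]

theorem diss_dis_image_union_bel_image (S X : Set (PLForm A)) :
    diss (LSent.dis '' S ∪ LSent.bel '' X) = S := by
  ext φ
  simp [diss]

end InformationSets

section Consistency

variable {A : Type} {Γ : Set (LSent A)}

theorem BD.PLCons_of_bel {φ : PLForm A} (h : BD Γ (.bel φ)) : PLCons (bels Γ) φ := by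
  cases h with
  | B h => exact h

theorem not_BIncons_of_PLSat (h : PLSat (bels Γ)) : ¬ BIncons Γ := by
  intro hB
  have := BD.PLCons_of_bel hB
  rw [bels_inter_LB] at this
  exact h.not_PLCons_falsum this

theorem not_BDIncons_of_PLSat (h : PLSat (bels Γ))
    (hdis : ∀ ψ ∈ diss Γ, ¬ PLCons (bels Γ) ψ) : ¬ BDIncons Γ := by
  rintro ⟨φ, hbel, hdis'⟩
  have hφ := BD.PLCons_of_bel hbel
  cases hdis' with
  | Dbot hbot => exact h.not_PLCons_falsum (hφ.trans_singleton hbot)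
  | D hmem hψ => exact hdis _ hmem (hφ.cut hψ)

end Consistency

/-- Lottery-paradox consistency in BD: if each `{φ₁ ∨ ⋯ ∨ φₙ, ¬φᵢ}` is
classically satisfiable, then `{φ̄₁, …, φ̄ₙ, φ₁ ∨ ⋯ ∨ φₙ}` is neither
B-inconsistent nor BD-inconsistent. -/
theorem bd_lottery (A : Type) (φs : List (PLForm A)) (hne : φs ≠ [])
    (hsat : ∀ φ ∈ φs, ∃ v : A → Bool,
      PLForm.eval v (φs.foldr PLForm.disj PLForm.falsum) = true ∧
        PLForm.eval v φ = false) :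
    ¬ BIncons ((LSent.dis '' {φ | φ ∈ φs}) ∪
        {LSent.bel (φs.foldr PLForm.disj PLForm.falsum)}) ∧
    ¬ BDIncons ((LSent.dis '' {φ | φ ∈ φs}) ∪
        {LSent.bel (φs.foldr PLForm.disj PLForm.falsum)}) := by
  set D := φs.foldr PLForm.disj PLForm.falsum
  rw [← Set.image_singleton]
  have hD : PLSat (bels (LSent.dis '' {φ | φ ∈ φs} ∪ LSent.bel '' {D})) := by
    obtain ⟨φ, hφ⟩ := List.exists_mem_of_ne_nil φs hne
    obtain ⟨v, hv, -⟩ := hsat φ hφ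
    refine ⟨v, ?_⟩
    simpa only [bels_dis_image_union_bel_image, Set.mem_singleton_iff, forall_eq] using hv
  refine ⟨not_BIncons_of_PLSat hD, not_BDIncons_of_PLSat hD ?_⟩
  intro ψ hψ hcons
  simp only [diss_dis_image_union_bel_image, bels_dis_image_union_bel_image] at hψ hcons
  obtain ⟨v, hvD, hvψ⟩ := hsat ψ hψ
  simp [hcons v (by simpa using hvD)] at hvψ
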